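/- Let G be a graph with n ≥ 5 vertices and M = M[IAS(G)]. If G is prime and κ(M) < n, then κ(M) is odd and κ(M) ≥ 5. -/

import Mathlib

open scoped ENat

variable {V : Type*} [Fintype V] [DecidableEq V]

/-- The column of the matrix `IAS(G) = (I | A | A+I)` indexed by `(v, i)`:
`i = 0` gives `φ(v)` (identity column), `i = 1` gives `χ(v)` (column of `A`),
`i = 2` gives `ψ(v)` (column of `A + I`). -/
def iasCol (A : Matrix V V (ZMod 2)) : V × Fin 3 → V → ZMod 2 :=
  fun p w =>
    if p.2 = 0 then (if w = p.1 then 1 else 0)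
    else if p.2 = 1 then A w p.1
    else A w p.1 + (if w = p.1 then 1 else 0)

/-- The rank of a subset of the ground set `W(G) = V × Fin 3` of the isotropic
matroid: the GF(2)-rank of the corresponding set of columns. -/
noncomputable def iasRank (A : Matrix V V (ZMod 2)) (S : Set (V × Fin 3)) : ℕ :=
  Module.finrank (ZMod 2) (Submodule.span (ZMod 2) (iasCol A '' S))

/-- The connectivity function `λ(S) = r(S) + r(W - S) - r(M)`. -/
noncomputable def iasLambda (A : Matrix V V (ZMod 2)) (S : Set (V × Fin 3)) : ℕ :=
  iasRank A S + iasRank A Sᶜ - iasRank A Set.univ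

/-- Independence in the isotropic matroid. -/
def iasIndep (A : Matrix V V (ZMod 2)) (S : Set (V × Fin 3)) : Prop :=
  LinearIndependent (ZMod 2) (fun s : S => iasCol A s.1)

/-- Circuits of the isotropic matroid: minimal dependent sets. -/
def iasCircuit (A : Matrix V V (ZMod 2)) (C : Set (V × Fin 3)) : Prop :=
  ¬ iasIndep A C ∧ ∀ S ⊂ C, iasIndep A S

/-- An ordinary `k`-separation: `λ(S) < k` and `|S|, |W - S| ≥ k`. -/
def OrdinarySep (A : Matrix V V (ZMod 2)) (k : ℕ) (S : Set (V × Fin 3)) : Prop :=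
  0 < k ∧ iasLambda A S < k ∧ k ≤ S.ncard ∧ k ≤ Sᶜ.ncard

/-- A cyclic `k`-separation: `λ(S) < k` and both `S` and `W - S` are dependent. -/
def CyclicSep (A : Matrix V V (ZMod 2)) (k : ℕ) (S : Set (V × Fin 3)) : Prop :=
  0 < k ∧ iasLambda A S < k ∧ ¬ iasIndep A S ∧ ¬ iasIndep A Sᶜ

/-- A vertical `k`-separation: `λ(S) < k` and `r(S), r(W - S) ≥ k`. -/
def VerticalSep (A : Matrix V V (ZMod 2)) (k : ℕ) (S : Set (V × Fin 3)) : Prop :=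
  0 < k ∧ iasLambda A S < k ∧ k ≤ iasRank A S ∧ k ≤ iasRank A Sᶜ

/-- `τ(M) = min {k : M has an ordinary k-separation}`, with `min ∅ = ∞`. -/
noncomputable def iasTau (A : Matrix V V (ZMod 2)) : ℕ∞ :=
  sInf {k : ℕ∞ | ∃ m : ℕ, (m : ℕ∞) = k ∧ ∃ S, OrdinarySep A m S}

/-- `κ*(M) = min ({k : M has a cyclic k-separation} ∪ {|W| - r(M)})`. -/
noncomputable def iasKappaStar (A : Matrix V V (ZMod 2)) : ℕ :=
  sInf ({k : ℕ | ∃ S, CyclicSep A k S} ∪ {3 * Fintype.card V - iasRank A Set.univ})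

/-- `κ(M) = min ({k : M has a vertical k-separation} ∪ {r(M)})`. -/
noncomputable def iasKappa (A : Matrix V V (ZMod 2)) : ℕ :=
  sInf ({k : ℕ | ∃ S, VerticalSep A k S} ∪ {iasRank A Set.univ})

/-- The simple graph underlying a looped simple graph given by its adjacency matrix. -/
def toSimpleGraph (A : Matrix V V (ZMod 2)) : SimpleGraph V where
  Adj v w := v ≠ w ∧ A v w = 1 ∧ A w v = 1
  symm := ⟨fun v w ⟨h1, h2, h3⟩ => ⟨Ne.symm h1, h3, h2⟩⟩
  loopless := ⟨fun v h => h.1 rfl⟩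

/-- The open neighborhood `N_G(v)`. -/
def nbhd (A : Matrix V V (ZMod 2)) (v : V) : Set V := {u | u ≠ v ∧ A v u = 1}

/-- `v` is a pendant vertex: `N_G(v) = {w}` for some `w`. -/
def IsPendant (A : Matrix V V (ZMod 2)) (v : V) : Prop := ∃ w, nbhd A v = {w}

/-- `G` has a pair of twin vertices: `v ≠ w` with `N_G(v) - {w} = N_G(w) - {v}`. -/
def HasTwins (A : Matrix V V (ZMod 2)) : Prop :=
  ∃ v w, v ≠ w ∧ nbhd A v \ {w} = nbhd A w \ {v}

/-- The cut-rank `c_G(X)`: the GF(2)-rank of the submatrix `A[V - X, X]`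
(columns indexed by `X`, rows indexed by `V - X`). -/
noncomputable def cutRank (A : Matrix V V (ZMod 2)) (X : Set V) : ℕ :=
  Module.finrank (ZMod 2)
    (Submodule.span (ZMod 2) ((fun x : V => fun w : ↥(Xᶜ) => A w.1 x) '' X))

/-- `τ_G(X) = ⋃_{x ∈ X} τ_G(x)`, the union of the vertex triples of members of `X`. -/
def tauSet (X : Set V) : Set (V × Fin 3) := {p | p.1 ∈ X}

/-- Loop complementation at `v`. -/
def loopComp (A : Matrix V V (ZMod 2)) (v : V) : Matrix V V (ZMod 2) :=
  fun x y => A x y + if x = v ∧ y = v then 1 else 0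

/-- Simple local complementation at `v`. -/
def simpleLocalComp (A : Matrix V V (ZMod 2)) (v : V) : Matrix V V (ZMod 2) :=
  fun x y => A x y +
    if x ≠ y ∧ (x ≠ v ∧ A v x = 1) ∧ (y ≠ v ∧ A v y = 1) then 1 else 0

/-- Non-simple local complementation at `v`. -/
def nonSimpleLocalComp (A : Matrix V V (ZMod 2)) (v : V) : Matrix V V (ZMod 2) :=
  fun x y => simpleLocalComp A v x y + if x = y ∧ x ≠ v ∧ A v x = 1 then 1 else 0

/-- One local move. -/
def LocalStep (A B : Matrix V V (ZMod 2)) : Prop :=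
  ∃ v, B = loopComp A v ∨ B = simpleLocalComp A v ∨ B = nonSimpleLocalComp A v

/-- Local equivalence: a finite sequence of loop complementations and
(simple or non-simple) local complementations. -/
def LocallyEquiv (A B : Matrix V V (ZMod 2)) : Prop :=
  Relation.ReflTransGen LocalStep A B

/-- `G` has a split: a bipartition `(V₁, V₂)` of `V` with `|V₁|, |V₂| ≥ 2` such that the
GF(2)-rank of `A[V₁, V₂]` is at most 1. -/
def HasSplit (A : Matrix V V (ZMod 2)) : Prop :=
  ∃ X : Set V, 2 ≤ X.ncard ∧ 2 ≤ Xᶜ.ncard ∧ cutRank A X ≤ 1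

/-- A transverse circuit: a circuit of the isotropic matroid meeting each
vertex triple at most once. -/
def IsTransverseCircuit (A : Matrix V V (ZMod 2)) (C : Set (V × Fin 3)) : Prop :=
  iasCircuit A C ∧ ∀ p ∈ C, ∀ q ∈ C, p.1 = q.1 → p = q

/-- An isotropic `k`-separation of `G`: `|X|, |V - X| ≥ k` and `c_G(X) < k`. -/
def IsotropicSep (A : Matrix V V (ZMod 2)) (k : ℕ) (X : Set V) : Prop :=
  k ≤ X.ncard ∧ k ≤ Xᶜ.ncard ∧ cutRank A X < k

/-- The isotropic connectivity `κ_B(G)`, with `min ∅ = ∞`. -/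
noncomputable def kappaB (A : Matrix V V (ZMod 2)) : ℕ∞ :=
  sInf {j : ℕ∞ | ∃ k : ℕ, (k : ℕ∞) = j ∧ ∃ X, IsotropicSep A k X}

/-- The 5-cycle `C₅`. -/
def C5mat : Matrix (Fin 5) (Fin 5) (ZMod 2) :=
  fun i j => if (i.val + 1) % 5 = j.val ∨ (j.val + 1) % 5 = i.val then 1 else 0

/-- The wheel `W₅` : a 5-cycle on `{0,…,4}` plus a hub `5` adjacent to all. -/
def W5mat : Matrix (Fin 6) (Fin 6) (ZMod 2) :=
  fun i j =>
    if (i.val = 5 ∧ j.val ≠ 5) ∨ (j.val = 5 ∧ i.val ≠ 5) then 1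
    else if i.val ≠ 5 ∧ j.val ≠ 5 ∧ ((i.val + 1) % 5 = j.val ∨ (j.val + 1) % 5 = i.val) then 1
    else 0

/-!
Let `S` be a vertical `κ`-separation of `M`, where `κ = κ(M) < n`. The three columns
`φ(v), χ(v), ψ(v)` of a vertex sum to zero, so any two of them span the third; by pigeonhole
each vertex triple therefore lies entirely in `⟨S⟩` or entirely in `⟨W - S⟩`. Let `X` be the set
of vertices whose triple lies in `⟨S⟩` and `c = c_G(X)`. Then `r(τ(X)) = |X| + c`,
`r(τ(V - X)) = |V - X| + c` and `λ(τ(X)) = 2c`, and comparing `τ(X)` with `S` gives `2c ≤ λ(S) < κ`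
and `c < |X|, |V - X|`. Hence `τ(X)` is a vertical `(2c + 1)`-separation, which forces
`κ = 2c + 1`. Finally `c ≤ 1` would give a split of `G` (after moving one vertex across when a
side is a single vertex), so `c ≥ 2` and `κ ≥ 5`.
-/

open Module Submodule Set

namespace Submodule

variable {K M N : Type*} [DivisionRing K] [AddCommGroup M] [Module K M] [AddCommGroup N]
  [Module K N] [FiniteDimensional K M]

theorem finrank_map_add_finrank_inf_ker (f : M →ₗ[K] N) (P : Submodule K M) :
    finrank K (P.map f) + finrank K ↥(P ⊓ LinearMap.ker f) = finrank K P := by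
  rw [← LinearMap.range_domRestrict, ← LinearMap.finrank_range_add_finrank_ker (f.domRestrict P),
    LinearMap.ker_domRestrict, ← Submodule.finrank_map_subtype_eq, Submodule.map_comap_subtype]

theorem finrank_add_finrank_inf_le_of_le_sup_inf {P Q U U' : Submodule K M} (hP : P ≤ U)
    (hQ : Q ≤ U') (hU : U ≤ P ⊔ U ⊓ U') :
    finrank K U + finrank K ↥(P ⊓ Q) ≤ finrank K P + finrank K ↥(U ⊓ U') := by
  have hsup := finrank_sup_add_finrank_inf_eq P (U ⊓ U')
  have h₁ : finrank K U ≤ finrank K ↥(P ⊔ U ⊓ U') := finrank_mono hU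
  have h₂ : finrank K ↥(P ⊓ Q) ≤ finrank K ↥(P ⊓ (U ⊓ U')) :=
    finrank_mono (le_inf inf_le_left (inf_le_inf hP hQ))
  omega

end Submodule

section ColumnSpans

omit [Fintype V]

variable (A : Matrix V V (ZMod 2))

abbrev iasSpan (S : Set (V × Fin 3)) : Submodule (ZMod 2) (V → ZMod 2) :=
  span (ZMod 2) (iasCol A '' S)

theorem iasRank_eq_finrank (S : Set (V × Fin 3)) : iasRank A S = finrank (ZMod 2) (iasSpan A S) :=
  rfl

theorem iasCol_mem_iasSpan {S : Set (V × Fin 3)} {p : V × Fin 3} (hp : p ∈ S) :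
    iasCol A p ∈ iasSpan A S :=
  subset_span (mem_image_of_mem _ hp)

theorem iasCol_zero (v : V) : iasCol A (v, 0) = fun w => if v = w then 1 else 0 := by
  funext w
  simp [iasCol, eq_comm]

theorem iasCol_two (v : V) : iasCol A (v, 2) = iasCol A (v, 1) + iasCol A (v, 0) := by
  funext w
  simp [iasCol]

theorem iasCol_mem_of_mem_of_mem {P : Submodule (ZMod 2) (V → ZMod 2)} {v : V} {i j : Fin 3}
    (hij : i ≠ j) (hi : iasCol A (v, i) ∈ P) (hj : iasCol A (v, j) ∈ P) (k : Fin 3) :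
    iasCol A (v, k) ∈ P := by
  have h₂ := iasCol_two A v
  have h₁ : iasCol A (v, 1) = iasCol A (v, 2) + iasCol A (v, 0) := by
    funext w
    simp [iasCol, add_assoc, CharTwo.add_self_eq_zero]
  have h₀ : iasCol A (v, 0) = iasCol A (v, 1) + iasCol A (v, 2) := by
    funext w
    simp [iasCol, ← add_assoc, CharTwo.add_self_eq_zero]
  have cases : ∀ i : Fin 3, i = 0 ∨ i = 1 ∨ i = 2 := by decide
  rcases cases i with rfl | rfl | rfl <;> rcases cases j with rfl | rfl | rfl <;>
    rcases cases k with rfl | rfl | rfl <;>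
    first
    | exact absurd rfl hij
    | assumption
    | (rw [h₀]; exact add_mem ‹_› ‹_›)
    | (rw [h₁]; exact add_mem ‹_› ‹_›)
    | (rw [h₂]; exact add_mem ‹_› ‹_›)

theorem forall_iasCol_mem_or_forall_iasCol_mem_compl (S : Set (V × Fin 3)) (v : V) :
    (∀ i, iasCol A (v, i) ∈ iasSpan A S) ∨ ∀ i, iasCol A (v, i) ∈ iasSpan A Sᶜ := by
  obtain ⟨i, j, hij, hsame⟩ := Fintype.exists_ne_map_eq_of_card_lt (fun i : Fin 3 => (v, i) ∈ S)
    (by simp)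
  by_cases hi : (v, i) ∈ S
  · have hj : (v, j) ∈ S := hsame ▸ hi
    exact .inl (iasCol_mem_of_mem_of_mem A hij (iasCol_mem_iasSpan A hi) (iasCol_mem_iasSpan A hj))
  · have hj : (v, j) ∉ S := hsame ▸ hi
    exact .inr (iasCol_mem_of_mem_of_mem A hij (iasCol_mem_iasSpan A (S := Sᶜ) hi)
      (iasCol_mem_iasSpan A (S := Sᶜ) hj))

theorem iasSpan_le_sup_inf (S : Set (V × Fin 3)) {X : Set V} {Q : Submodule (ZMod 2) (V → ZMod 2)}
    (hQ : ∀ v ∉ X, ∀ i, iasCol A (v, i) ∈ Q) :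
    iasSpan A S ≤ iasSpan A (tauSet X) ⊔ iasSpan A S ⊓ Q := by
  refine span_le.mpr ?_
  rintro _ ⟨p, hp, rfl⟩
  by_cases hpX : p.1 ∈ X
  · exact mem_sup_left (iasCol_mem_iasSpan A (S := tauSet X) hpX)
  · exact mem_sup_right ⟨iasCol_mem_iasSpan A hp, hQ p.1 hpX p.2⟩

variable {A}

theorem iasKappa_le {k : ℕ} {S : Set (V × Fin 3)} (hS : VerticalSep A k S) : iasKappa A ≤ k :=
  Nat.sInf_le (Or.inl ⟨S, hS⟩)

theorem exists_verticalSep_iasKappa (h : iasKappa A < iasRank A univ) :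
    ∃ S, VerticalSep A (iasKappa A) S := by
  rcases Nat.sInf_mem (⟨_, Or.inr rfl⟩ : ({k | ∃ S, VerticalSep A k S} ∪ {iasRank A univ}).Nonempty)
    with hS | hS
  · exact hS
  · exact absurd hS h.ne

end ColumnSpans

section CutRank

omit [DecidableEq V]

variable {A : Matrix V V (ZMod 2)}

theorem cutRank_compl (hA : A.IsSymm) (X : Set V) : cutRank A Xᶜ = cutRank A X := by
  have : Fintype ↥X := .ofFinite _
  have : Fintype ↥Xᶜ := .ofFinite _
  have : Fintype ↥Xᶜᶜ := .ofFinite _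
  have hrank (Y : Set V) [Fintype ↥Y] :
      cutRank A Y = (A.submatrix ((↑) : ↥Yᶜ → V) ((↑) : ↥Y → V)).rank := by
    rw [Matrix.rank_eq_finrank_span_cols, cutRank, image_eq_range]
    rfl
  rw [hrank, hrank, ← Matrix.rank_transpose, Matrix.transpose_submatrix, hA.eq]
  have hreindex : A.submatrix ((↑) : ↥Xᶜ → V) ((↑) : ↥Xᶜᶜ → V) =
      (A.submatrix (↑) ((↑) : ↥X → V)).submatrix (Equiv.refl _) (Equiv.setCongr (compl_compl X)) :=
    rfl
  rw [hreindex, Matrix.rank_submatrix]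

variable (A) in
theorem cutRank_insert_le (X : Set V) (u : V) : cutRank A (insert u X) ≤ cutRank A X + 1 := by
  set g : V → ↥(insert u X)ᶜ → ZMod 2 := fun x w => A w x
  set ρ := LinearMap.funLeft (ZMod 2) (ZMod 2)
    (inclusion (compl_subset_compl.mpr (subset_insert u X)))
  have hX : span (ZMod 2) (g '' X) = (span (ZMod 2) ((fun x (w : ↥Xᶜ) => A w x) '' X)).map ρ := by
    rw [map_span, image_image]
    rfl
  calc cutRank A (insert u X) = finrank (ZMod 2) ↥(ZMod 2 ∙ g u ⊔ span (ZMod 2) (g '' X)) := by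
        rw [cutRank, image_insert_eq, span_insert]
    _ ≤ finrank (ZMod 2) ↥(ZMod 2 ∙ g u) + finrank (ZMod 2) ↥(span (ZMod 2) (g '' X)) :=
        finrank_add_le_finrank_add_finrank _ _
    _ ≤ 1 + cutRank A X := by
        gcongr
        · simpa using finrank_span_le_card ({g u} : Set _)
        · rw [hX]
          exact finrank_map_le ρ _
    _ = cutRank A X + 1 := add_comm _ _

theorem hasSplit_of_cutRank_eq_zero {X : Set V} (hX : X.Nonempty) (hXc : 3 ≤ Xᶜ.ncard)
    (h : cutRank A X = 0) : HasSplit A := by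
  obtain ⟨u, hu⟩ := nonempty_of_ncard_ne_zero (s := Xᶜ) (by omega)
  have hcard := ncard_add_ncard_compl X
  have hcard' := ncard_add_ncard_compl (insert u X)
  rw [ncard_insert_of_notMem hu] at hcard'
  have := hX.ncard_pos
  exact ⟨insert u X, by rw [ncard_insert_of_notMem hu]; omega, by omega,
    by have := cutRank_insert_le A X u; omega⟩

theorem hasSplit_of_isotropicSep (hA : A.IsSymm) (hn : 5 ≤ Fintype.card V) {X : Set V}
    (hX : IsotropicSep A (cutRank A X + 1) X) (hc : cutRank A X ≤ 1) : HasSplit A := by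
  obtain ⟨hXcard, hXccard, -⟩ := hX
  have hcard : X.ncard + Xᶜ.ncard = Fintype.card V := by
    rw [ncard_add_ncard_compl, Nat.card_eq_fintype_card]
  by_cases hsmall : X.ncard = 1
  · exact hasSplit_of_cutRank_eq_zero (X := X) (nonempty_of_ncard_ne_zero (by omega)) (by omega)
      (by omega)
  by_cases hsmall' : Xᶜ.ncard = 1
  · exact hasSplit_of_cutRank_eq_zero (X := Xᶜ) (nonempty_of_ncard_ne_zero (by omega))
      (by rw [compl_compl]; omega) (by rw [cutRank_compl hA]; omega)
  exact ⟨X, by omega, by omega, hc⟩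

end CutRank

section Ranks

variable (A : Matrix V V (ZMod 2))

theorem iasSpan_eq_top {S : Set (V × Fin 3)} (hS : ∀ v, (v, 0) ∈ S) : iasSpan A S = ⊤ := by
  refine eq_top_iff.mpr fun f _ => ?_
  rw [pi_eq_sum_univ f]
  refine sum_mem fun v _ => smul_mem _ _ ?_
  rw [← iasCol_zero]
  exact iasCol_mem_iasSpan A (hS v)

theorem iasRank_univ : iasRank A univ = Fintype.card V := by
  rw [iasRank_eq_finrank, iasSpan_eq_top A (fun _ => mem_univ _), finrank_top,
    finrank_fintype_fun_eq_card]

theorem iasSpan_sup_iasSpan_compl (S : Set (V × Fin 3)) : iasSpan A S ⊔ iasSpan A Sᶜ = ⊤ := by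
  rw [← span_union, ← image_union, union_compl_self]
  exact iasSpan_eq_top A fun _ => mem_univ _

theorem iasRank_add_iasRank_compl (S : Set (V × Fin 3)) :
    iasRank A S + iasRank A Sᶜ =
      Fintype.card V + finrank (ZMod 2) ↥(iasSpan A S ⊓ iasSpan A Sᶜ) := by
  rw [iasRank_eq_finrank, iasRank_eq_finrank, ← finrank_sup_add_finrank_inf_eq,
    iasSpan_sup_iasSpan_compl, finrank_top, finrank_fintype_fun_eq_card]

theorem iasLambda_eq_finrank_inf (S : Set (V × Fin 3)) :
    iasLambda A S = finrank (ZMod 2) ↥(iasSpan A S ⊓ iasSpan A Sᶜ) := by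
  rw [iasLambda, iasRank_univ, iasRank_add_iasRank_compl, Nat.add_sub_cancel_left]

theorem iasRank_tauSet (X : Set V) : iasRank A (tauSet X) = X.ncard + cutRank A X := by
  have : Fintype ↥Xᶜ := .ofFinite _
  -- Restriction to the coordinates in `Xᶜ` kills `φ(x)` and sends `χ(x)` and `ψ(x)` to the
  -- column of `A[Xᶜ, X]` at `x`; its kernel is spanned by the `φ(x)` with `x ∈ X`.
  set π := LinearMap.funLeft (ZMod 2) (ZMod 2) ((↑) : ↥Xᶜ → V)
  have hπ (x : V) (hx : x ∈ X) (i : Fin 3) :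
      π (iasCol A (x, i)) = if i = 0 then 0 else fun w : ↥Xᶜ => A w x := by
    have hw (w : ↥Xᶜ) : (w : V) ≠ x := fun h => w.2 (h ▸ hx)
    funext w
    split_ifs with hi <;> simp [π, iasCol, hi, hw w]
  have hmap : (iasSpan A (tauSet X)).map π = span (ZMod 2) ((fun x (w : ↥Xᶜ) => A w x) '' X) := by
    rw [map_span, image_image]
    refine le_antisymm (span_le.mpr ?_) (span_mono ?_)
    · rintro _ ⟨⟨x, i⟩, hx, rfl⟩
      change π (iasCol A (x, i)) ∈ _
      rw [hπ x hx i]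
      split_ifs
      · exact zero_mem _
      · exact subset_span (mem_image_of_mem _ hx)
    · rintro _ ⟨x, hx, rfl⟩
      exact ⟨(x, 1), hx, by simp [hπ x hx]⟩
  have hker : LinearMap.ker π ≤ iasSpan A (tauSet X) := by
    intro f hf
    rw [pi_eq_sum_univ f]
    refine sum_mem fun v _ => ?_
    by_cases hv : v ∈ X
    · rw [← iasCol_zero]
      exact smul_mem _ _ (iasCol_mem_iasSpan A (S := tauSet X) (p := (v, 0)) hv)
    · rw [show f v = 0 from congr_fun hf ⟨v, hv⟩, zero_smul]
      exact zero_mem _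
  have hkerdim : finrank (ZMod 2) (LinearMap.ker π) + Xᶜ.ncard = Fintype.card V := by
    have hrange : LinearMap.range π = ⊤ :=
      LinearMap.range_eq_top.mpr
        (LinearMap.funLeft_surjective_of_injective _ _ _ Subtype.val_injective)
    have := LinearMap.finrank_range_add_finrank_ker π
    rw [hrange, finrank_top, finrank_fintype_fun_eq_card, finrank_fintype_fun_eq_card,
      ← Nat.card_eq_fintype_card, Nat.card_coe_set_eq] at this
    omega
  have hcard : X.ncard + Xᶜ.ncard = Fintype.card V := by
    rw [ncard_add_ncard_compl, Nat.card_eq_fintype_card]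
  have hcut : finrank (ZMod 2) ↥((iasSpan A (tauSet X)).map π) = cutRank A X := by
    rw [hmap]
    rfl
  have := finrank_map_add_finrank_inf_ker π (iasSpan A (tauSet X))
  rw [hcut, inf_eq_right.mpr hker] at this
  rw [iasRank_eq_finrank, ← this]
  omega

variable {A}

theorem iasLambda_tauSet (hA : A.IsSymm) (X : Set V) :
    iasLambda A (tauSet X) = 2 * cutRank A X := by
  have h := iasRank_add_iasRank_compl A (tauSet X)
  rw [← iasLambda_eq_finrank_inf, show (tauSet X)ᶜ = tauSet Xᶜ from rfl, iasRank_tauSet,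
    iasRank_tauSet, cutRank_compl hA, ← Nat.card_eq_fintype_card, ← ncard_add_ncard_compl X] at h
  omega

theorem exists_isotropicSep_of_verticalSep (hA : A.IsSymm) {k : ℕ} {S : Set (V × Fin 3)}
    (hS : VerticalSep A k S) : ∃ X, IsotropicSep A (cutRank A X + 1) X ∧ 2 * cutRank A X < k := by
  obtain ⟨-, hlambda, hrank, hrank'⟩ := hS
  set X := {v | ∀ i, iasCol A (v, i) ∈ iasSpan A S}
  have hXc : ∀ v ∉ X, ∀ i, iasCol A (v, i) ∈ iasSpan A Sᶜ := fun v hv =>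
    (forall_iasCol_mem_or_forall_iasCol_mem_compl A S v).resolve_left hv
  have hP : iasSpan A (tauSet X) ≤ iasSpan A S := span_le.mpr <| by
    rintro _ ⟨p, hp, rfl⟩
    exact hp p.2
  have hQ : iasSpan A (tauSet Xᶜ) ≤ iasSpan A Sᶜ := span_le.mpr <| by
    rintro _ ⟨p, hp, rfl⟩
    exact hXc p.1 hp p.2
  have h₁ := finrank_add_finrank_inf_le_of_le_sup_inf hP hQ (iasSpan_le_sup_inf A S hXc)
  have h₂ := finrank_add_finrank_inf_le_of_le_sup_inf hQ hP
    (iasSpan_le_sup_inf A Sᶜ (X := Xᶜ) fun v hv => not_not.mp hv)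
  have h₃ : finrank (ZMod 2) ↥(iasSpan A (tauSet X) ⊓ iasSpan A (tauSet Xᶜ)) ≤
      finrank (ZMod 2) ↥(iasSpan A S ⊓ iasSpan A Sᶜ) :=
    finrank_mono (inf_le_inf hP hQ)
  rw [inf_comm (iasSpan A (tauSet Xᶜ)), inf_comm (iasSpan A Sᶜ)] at h₂
  have hτ : finrank (ZMod 2) ↥(iasSpan A (tauSet X) ⊓ iasSpan A (tauSet Xᶜ)) = 2 * cutRank A X :=
    (iasLambda_eq_finrank_inf A (tauSet X)).symm.trans (iasLambda_tauSet hA X)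
  rw [← iasRank_eq_finrank, ← iasRank_eq_finrank, iasRank_tauSet, hτ] at h₁
  rw [← iasRank_eq_finrank, ← iasRank_eq_finrank, iasRank_tauSet, cutRank_compl hA, hτ] at h₂
  rw [iasLambda_eq_finrank_inf] at hlambda
  exact ⟨X, ⟨by omega, by omega, by omega⟩, by omega⟩

theorem verticalSep_tauSet (hA : A.IsSymm) {X : Set V} (hX : IsotropicSep A (cutRank A X + 1) X) :
    VerticalSep A (2 * cutRank A X + 1) (tauSet X) := by
  obtain ⟨hX, hXc, -⟩ := hX
  refine ⟨Nat.succ_pos _, by rw [iasLambda_tauSet hA]; omega, ?_, ?_⟩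
  · rw [iasRank_tauSet]
    omega
  · rw [show (tauSet X)ᶜ = tauSet Xᶜ from rfl, iasRank_tauSet, cutRank_compl hA]
    omega

end Ranks

theorem stmt9 (A : Matrix V V (ZMod 2)) (hA : A.IsSymm) (hn : 5 ≤ Fintype.card V)
    (hprime : ¬ HasSplit A) (h : iasKappa A < Fintype.card V) :
    Odd (iasKappa A) ∧ 5 ≤ iasKappa A := by
  obtain ⟨S, hS⟩ := exists_verticalSep_iasKappa (A := A) (by rwa [iasRank_univ])
  obtain ⟨X, hX, hlt⟩ := exists_isotropicSep_of_verticalSep hA hS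
  have hκ : iasKappa A = 2 * cutRank A X + 1 :=
    le_antisymm (iasKappa_le (verticalSep_tauSet hA hX)) hlt
  have hc : 2 ≤ cutRank A X := by
    by_contra! hc
    exact hprime (hasSplit_of_isotropicSep hA hn hX (by omega))
  exact ⟨⟨cutRank A X, hκ⟩, by omega⟩
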